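/- Let n ≥ 2 and let T ∈ M_n(k') be an invertible diagonal matrix. For every x ∈ 𝔛_T there is a unique hermitian matrix D(x) ∈ M_2(k') (D(x)* = D(x)) such that g(x,v) = v* · D(x) · v for all v ∈ M_{2,1}(k'). Moreover: the diagonal entries D(x)_{11} and D(x)_{22} lie in k; D(x)_{12} + D(x)_{21} = −f_{T,n−1}(x); and if f_{T,i}(x) ≠ 0 for all 1 ≤ i ≤ n, then det D(x) = 0. -/

import Mathlib

open Matrix MeasureTheory
open scoped BigOperators
noncomputable section
open Classical

/-- Conjugate transpose of a matrix with respect to an involution `conj` of the field. -/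
def ctr {k' : Type} [Field k'] (conj : k' ≃+* k') {m l : Type} (A : Matrix m l k') :
    Matrix l m k' := fun i j => conj (A j i)

/-- The split hermitian form `H_n = [[0,1_n],[1_n,0]]`. -/
def Hmat (k' : Type) [Field k'] (n : ℕ) : Matrix (Fin n ⊕ Fin n) (Fin n ⊕ Fin n) k' :=
  Matrix.fromBlocks 0 1 1 0

/-- The hermitian form `H_1 = [[0,1],[1,0]]`. -/
def H1 (k' : Type) [Field k'] : Matrix (Fin 2) (Fin 2) k' := !![0, 1; 1, 0]

/-- The lower `n × n` block of a `2n × n` matrix. -/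
def lowerBlock {k' : Type} [Field k'] {n : ℕ} (x : Matrix (Fin n ⊕ Fin n) (Fin n) k') :
    Matrix (Fin n) (Fin n) k' := fun i j => x (Sum.inr i) j

/-- `d_i(y)` : determinant of the upper left `i × i` block of `y`. -/
def dmin {k' : Type} [Field k'] {n : ℕ} (i : ℕ) (hi : i ≤ n)
    (y : Matrix (Fin n) (Fin n) k') : k' :=
  (y.submatrix (Fin.castLE hi) (Fin.castLE hi)).det

/-- The relative invariant `f_{T,i}(x) = d_i(x₂ T⁻¹ x₂*)`. -/
def fTi {k' : Type} [Field k'] (conj : k' ≃+* k') {n : ℕ}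
    (T : Matrix (Fin n) (Fin n) k') (x : Matrix (Fin n ⊕ Fin n) (Fin n) k')
    (i : ℕ) (hi : i ≤ n) : k' :=
  dmin i hi (lowerBlock x * T⁻¹ * ctr conj (lowerBlock x))

/-- The matrix `M(x,v)` : first `n−1` rows those of `x₂`, last row
`v_1·(last row of x₂) − v_2·(last row of the upper block of x)`. -/
def Mxv {k' : Type} [Field k'] {n : ℕ} (x : Matrix (Fin n ⊕ Fin n) (Fin n) k')
    (v : Fin 2 → k') : Matrix (Fin n) (Fin n) k' :=
  fun i j =>
    if (i : ℕ) = n - 1 then v 0 * x (Sum.inr i) j - v 1 * x (Sum.inl i) j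
    else x (Sum.inr i) j

/-- `g(x,v) = det(M(x,v) T⁻¹ M(x,v)*)`. -/
def gxv {k' : Type} [Field k'] (conj : k' ≃+* k') {n : ℕ}
    (T : Matrix (Fin n) (Fin n) k') (x : Matrix (Fin n ⊕ Fin n) (Fin n) k')
    (v : Fin 2 → k') : k' :=
  (Mxv x v * T⁻¹ * ctr conj (Mxv x v)).det

/-! Write `x = (Z; Y)` with `Y = x₂`, so that `x* H x = T` reads `Y* Z + Z* Y = T`. The matrix
`M(x,v)` differs from `Y` only in its last row, which is linear in `v`, so
`det M(x,v) = v₁ α - v₂ β` with `α = det Y` and `β` the determinant of `Y` with its last row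
replaced by that of `Z`. Hence `g(x,v) = det(T)⁻¹ |v₁ α - v₂ β|²` is a hermitian form of rank one,
which gives `D(x)` and `det D(x) = 0`; it is unique because `*` is not the identity.

For the off-diagonal entries, `f_{T,n-1}(x)` is the last diagonal cofactor of `Y T⁻¹ Y*`, and
`adj(Y T⁻¹ Y*) = adj(Y)* · det(T)⁻¹ T · adj(Y)`. Substituting `T = Y* Z + Z* Y` and using
`Y adj(Y) = α · 1` and `(Z adj(Y))_{nn} = β` gives `f_{T,n-1}(x) = det(T)⁻¹ (ᾱ β + β̄ α)`. -/

def upperBlock {k' : Type} [Field k'] {n : ℕ} (x : Matrix (Fin n ⊕ Fin n) (Fin n) k') :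
    Matrix (Fin n) (Fin n) k' :=
  fun i j => x (Sum.inl i) j

section ConjTranspose

variable {k' : Type} [Field k'] (conj : k' ≃+* k')

lemma ctr_eq_transpose_map {m l : Type} (A : Matrix m l k') :
    ctr conj A = (A.map conj)ᵀ := rfl

lemma ctr_mul {m l p : Type} [Fintype l] (A : Matrix m l k') (B : Matrix l p k') :
    ctr conj (A * B) = ctr conj B * ctr conj A := by
  ext i j
  simp only [ctr, mul_apply, map_sum, map_mul, mul_comm]

lemma ctr_ctr (hinvol : ∀ a, conj (conj a) = a) {m l : Type} (A : Matrix m l k') :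
    ctr conj (ctr conj A) = A := by
  ext i j
  exact hinvol _

lemma ctr_smul_one {m : Type} [DecidableEq m] (c : k') :
    ctr conj (c • (1 : Matrix m m k')) = conj c • 1 := by
  ext i j
  by_cases h : i = j <;> simp [ctr, one_apply, h, eq_comm]

lemma det_ctr {m : Type} [Fintype m] [DecidableEq m] (M : Matrix m m k') :
    (ctr conj M).det = conj M.det := by
  rw [ctr_eq_transpose_map, det_transpose]
  exact (RingHom.map_det conj.toRingHom M).symm

lemma adjugate_ctr {m : Type} [Fintype m] [DecidableEq m] (M : Matrix m m k') :
    adjugate (ctr conj M) = ctr conj (adjugate M) := by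
  rw [ctr_eq_transpose_map, ctr_eq_transpose_map, ← adjugate_transpose]
  exact congrArg transpose (RingHom.map_adjugate conj.toRingHom M).symm

lemma ctr_Hmat (n : ℕ) : ctr conj (Hmat k' n) = Hmat k' n := by
  ext (i | i) (j | j) <;> by_cases h : i = j <;> simp [ctr, Hmat, one_apply, h, eq_comm]

lemma ctr_mul_Hmat_mul {n : ℕ} (x : Matrix (Fin n ⊕ Fin n) (Fin n) k') :
    ctr conj x * Hmat k' n * x =
      ctr conj (lowerBlock x) * upperBlock x + ctr conj (upperBlock x) * lowerBlock x := by
  have hx : x = Matrix.fromRows (upperBlock x) (lowerBlock x) := by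
    ext (i | i) j <;> rfl
  have hctr : ctr conj x = Matrix.fromCols (ctr conj (upperBlock x)) (ctr conj (lowerBlock x)) := by
    ext i (j | j) <;> rfl
  rw [hctr, Hmat, Matrix.fromCols_mul_fromBlocks]
  conv_lhs => arg 2; rw [hx]
  rw [Matrix.fromCols_mul_fromRows]
  simp [add_comm]

lemma ctr_eq_self_of_ctr_mul_Hmat_mul_eq (hinvol : ∀ a, conj (conj a) = a) {n : ℕ}
    {T : Matrix (Fin n) (Fin n) k'} {x : Matrix (Fin n ⊕ Fin n) (Fin n) k'}
    (hx : ctr conj x * Hmat k' n * x = T) : ctr conj T = T := by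
  rw [← hx, ctr_mul, ctr_mul, ctr_ctr conj hinvol, ctr_Hmat, Matrix.mul_assoc]

lemma conj_det_inv_of_ctr_eq_self {m : Type} [Fintype m] [DecidableEq m] {T : Matrix m m k'}
    (hT : ctr conj T = T) : conj T⁻¹.det = T⁻¹.det := by
  rw [det_nonsing_inv, Ring.inverse_eq_inv', map_inv₀, ← det_ctr, hT]

end ConjTranspose

section SesqForm

variable {k' : Type} [Field k'] (conj : k' ≃+* k') {ι : Type}

def sesqForm [Fintype ι] (D : Matrix ι ι k') (v : ι → k') : k' :=
  ∑ i, ∑ j, conj (v i) * D i j * v j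

lemma ctr_vecMulVec (hinvol : ∀ a, conj (conj a) = a) {c : k'} (hc : conj c = c) (u : ι → k') :
    ctr conj (vecMulVec (fun i => conj (u i)) (c • u)) =
      vecMulVec (fun i => conj (u i)) (c • u) := by
  ext i j
  simp only [ctr, vecMulVec_apply, Pi.smul_apply, smul_eq_mul, map_mul, hinvol, hc]
  ring

variable [Fintype ι]

lemma sesqForm_vecMulVec (c : k') (u v : ι → k') :
    sesqForm conj (vecMulVec (fun i => conj (u i)) (c • u)) v =
      c * conj (u ⬝ᵥ v) * (u ⬝ᵥ v) := by
  simp_rw [sesqForm, dotProduct, map_sum, mul_assoc c, Finset.sum_mul_sum, Finset.mul_sum]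
  refine Finset.sum_congr rfl fun i _ => Finset.sum_congr rfl fun j _ => ?_
  simp only [vecMulVec_apply, Pi.smul_apply, smul_eq_mul, map_mul]
  ring

lemma sesqForm_sub (D D' : Matrix ι ι k') (v : ι → k') :
    sesqForm conj (D - D') v = sesqForm conj D v - sesqForm conj D' v := by
  simp only [sesqForm, Matrix.sub_apply, mul_sub, sub_mul, Finset.sum_sub_distrib]

lemma sesqForm_single_add_single [DecidableEq ι] (D : Matrix ι ι k') (i j : ι) (a b : k') :
    sesqForm conj D (Pi.single i a + Pi.single j b) =
      conj a * D i i * a + conj a * D i j * b + conj b * D j i * a + conj b * D j j * b := by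
  simp only [sesqForm, Pi.add_apply, Pi.single_apply, map_add, apply_ite conj, map_zero, add_mul,
    ite_mul, zero_mul, mul_add, mul_ite, mul_zero, Finset.sum_add_distrib, Finset.sum_ite_eq',
    Finset.mem_univ, ↓reduceIte]
  ring

lemma eq_zero_of_forall_sesqForm_eq_zero [DecidableEq ι] (hconj_ne : ∃ a, conj a ≠ a)
    {E : Matrix ι ι k'} (h : ∀ v, sesqForm conj E v = 0) : E = 0 := by
  obtain ⟨c, hc⟩ := hconj_ne
  have hE : ∀ i j a b, conj a * E i i * a + conj a * E i j * b + conj b * E j i * a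
      + conj b * E j j * b = 0 := fun i j a b => by
    rw [← sesqForm_single_add_single]
    exact h _
  have hdiag : ∀ i, E i i = 0 := fun i => by simpa using hE i i 1 0
  ext i j
  have hsum : E i j + E j i = 0 := by simpa [hdiag] using hE i j 1 1
  have hskew : E i j * c + conj c * E j i = 0 := by simpa [hdiag] using hE i j 1 c
  have : (c - conj c) * E i j = 0 := by linear_combination hskew - conj c * hsum
  simpa [sub_eq_zero, hc.symm] using this

lemma eq_of_forall_sesqForm_eq [DecidableEq ι] (hconj_ne : ∃ a, conj a ≠ a)
    {D D' : Matrix ι ι k'} (h : ∀ v, sesqForm conj D v = sesqForm conj D' v) : D = D' :=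
  sub_eq_zero.mp <| eq_zero_of_forall_sesqForm_eq_zero conj hconj_ne fun v => by
    rw [sesqForm_sub, h, sub_self]

end SesqForm

section Determinants

variable {k' : Type} [Field k'] (conj : k' ≃+* k')

lemma mul_adjugate_apply_eq_det_updateRow {ι : Type} [Fintype ι] [DecidableEq ι]
    (Z Y : Matrix ι ι k') (i j : ι) :
    (Z * adjugate Y) i j = (Y.updateRow j (Z i)).det := by
  rw [← cramer_transpose_apply, cramer_eq_adjugate_mulVec, ← adjugate_transpose,
    mulVec_transpose]
  rfl

lemma adjugate_inv {ι : Type} [Fintype ι] [DecidableEq ι] {T : Matrix ι ι k'}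
    (hT : IsUnit T.det) : adjugate T⁻¹ = T⁻¹.det • T := by
  calc adjugate T⁻¹ = T * (T⁻¹ * adjugate T⁻¹) := by
        rw [← Matrix.mul_assoc, mul_nonsing_inv T hT, Matrix.one_mul]
    _ = T⁻¹.det • T := by rw [mul_adjugate, Matrix.mul_smul, Matrix.mul_one]

lemma adjugate_mul_inv_mul_ctr_apply_self {ι : Type} [Fintype ι] [DecidableEq ι]
    {Y Z T : Matrix ι ι k'} (hT : IsUnit T.det) (hYZ : ctr conj Y * Z + ctr conj Z * Y = T)
    (l : ι) :
    adjugate (Y * T⁻¹ * ctr conj Y) l l = T⁻¹.det *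
      (conj Y.det * (Y.updateRow l (Z l)).det + conj (Y.updateRow l (Z l)).det * Y.det) := by
  have hadj : adjugate (Y * T⁻¹ * ctr conj Y) = T⁻¹.det •
      (ctr conj (Y * adjugate Y) * (Z * adjugate Y) +
        ctr conj (Z * adjugate Y) * (Y * adjugate Y)) := by
    rw [adjugate_mul_distrib, adjugate_mul_distrib, adjugate_ctr, adjugate_inv hT, ← hYZ,
      ctr_mul, ctr_mul]
    simp only [Matrix.mul_smul, Matrix.smul_mul, Matrix.mul_add, Matrix.add_mul,
      Matrix.mul_assoc]
  rw [hadj, mul_adjugate, ctr_smul_one]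
  simp only [Matrix.smul_mul, Matrix.mul_smul, Matrix.one_mul, Matrix.mul_one, Matrix.smul_apply,
    Matrix.add_apply, smul_eq_mul, ctr, mul_adjugate_apply_eq_det_updateRow]
  ring

lemma dmin_pred_eq_adjugate {m : ℕ} (h : m + 1 - 1 ≤ m + 1)
    (y : Matrix (Fin (m + 1)) (Fin (m + 1)) k') :
    dmin (m + 1 - 1) h y = adjugate y (Fin.last m) (Fin.last m) := by
  rw [adjugate_fin_succ_eq_det_submatrix, Fin.succAbove_last, ← two_mul, pow_mul, neg_one_sq,
    one_pow, one_mul]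
  rfl

lemma Mxv_eq_updateRow {m : ℕ} (x : Matrix (Fin (m + 1) ⊕ Fin (m + 1)) (Fin (m + 1)) k')
    (v : Fin 2 → k') :
    Mxv x v = (lowerBlock x).updateRow (Fin.last m)
      (v 0 • lowerBlock x (Fin.last m) - v 1 • upperBlock x (Fin.last m)) := by
  ext i j
  by_cases h : i = Fin.last m
  · subst h
    simp [Mxv, lowerBlock, upperBlock]
  · have h' : (i : ℕ) ≠ m := fun hi => h (Fin.ext hi)
    simp [Mxv, lowerBlock, h, h']

lemma det_Mxv {m : ℕ} (x : Matrix (Fin (m + 1) ⊕ Fin (m + 1)) (Fin (m + 1)) k')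
    (v : Fin 2 → k') :
    (Mxv x v).det = ![(lowerBlock x).det,
      -((lowerBlock x).updateRow (Fin.last m) (upperBlock x (Fin.last m))).det] ⬝ᵥ v := by
  rw [Mxv_eq_updateRow, sub_eq_add_neg, ← neg_smul, det_updateRow_add, det_updateRow_smul,
    det_updateRow_smul, updateRow_eq_self, dotProduct, Fin.sum_univ_two]
  simp only [Matrix.cons_val_zero, Matrix.cons_val_one]
  ring

end Determinants

theorem stmt8_general
    {k' : Type} [Field k']
    (conj : k' ≃+* k') (hinvol : ∀ a, conj (conj a) = a) (hconj_ne : ∃ a, conj a ≠ a)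
    (n : ℕ) (hn : 2 ≤ n)
    (T : Matrix (Fin n) (Fin n) k')
    (hTinv : IsUnit T.det)
    (x : Matrix (Fin n ⊕ Fin n) (Fin n) k') (hx : ctr conj x * Hmat k' n * x = T) :
    ∃ D : Matrix (Fin 2) (Fin 2) k',
      (ctr conj D = D ∧
        ∀ vv : Fin 2 → k',
          gxv conj T x vv = ∑ i : Fin 2, ∑ j : Fin 2, conj (vv i) * D i j * vv j) ∧
      (∀ D' : Matrix (Fin 2) (Fin 2) k',
        (ctr conj D' = D' ∧
          ∀ vv : Fin 2 → k',
            gxv conj T x vv = ∑ i : Fin 2, ∑ j : Fin 2, conj (vv i) * D' i j * vv j) →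
        D' = D) ∧
      conj (D 0 0) = D 0 0 ∧ conj (D 1 1) = D 1 1 ∧
      D 0 1 + D 1 0 = -(fTi conj T x (n - 1) (Nat.sub_le n 1)) ∧
      ((∀ (i : ℕ) (h1 : 1 ≤ i) (h2 : i ≤ n), fTi conj T x i h2 ≠ 0) → D.det = 0) := by
  obtain ⟨m, rfl⟩ : ∃ m, n = m + 1 := ⟨n - 1, by omega⟩
  set Y := lowerBlock x
  set β := (Y.updateRow (Fin.last m) (upperBlock x (Fin.last m))).det
  set c := T⁻¹.det
  set u : Fin 2 → k' := ![Y.det, -β]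
  set D := vecMulVec (fun i => conj (u i)) (c • u)
  have hc : conj c = c :=
    conj_det_inv_of_ctr_eq_self conj (ctr_eq_self_of_ctr_mul_Hmat_mul_eq conj hinvol hx)
  have hherm : ctr conj D = D := ctr_vecMulVec conj hinvol hc u
  have hg : ∀ v, gxv conj T x v = sesqForm conj D v := fun v => by
    rw [sesqForm_vecMulVec, ← det_Mxv, gxv, det_mul, det_mul, det_ctr]
    ring
  refine ⟨D, ⟨hherm, hg⟩, fun D' ⟨_, hD'⟩ => eq_of_forall_sesqForm_eq conj hconj_ne
      fun v => (hD' v).symm.trans (hg v), congrFun (congrFun hherm 0) 0,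
      congrFun (congrFun hherm 1) 1, ?_, fun _ => det_vecMulVec _ _⟩
  rw [fTi, dmin_pred_eq_adjugate,
    adjugate_mul_inv_mul_ctr_apply_self conj hTinv ((ctr_mul_Hmat_mul conj x).symm.trans hx)]
  simp only [D, u, vecMulVec_apply, Pi.smul_apply, smul_eq_mul, Matrix.cons_val_zero,
    Matrix.cons_val_one, map_neg]
  ring

/-- existence and uniqueness of the hermitian matrix `D(x)` with
`g(x,v) = v* D(x) v`, together with its basic properties. -/
theorem stmt8
    {k' : Type} [Field k'] [CharZero k']
    (conj : k' ≃+* k') (hinvol : ∀ a, conj (conj a) = a) (hconj_ne : ∃ a, conj a ≠ a)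
    (n : ℕ) (hn : 2 ≤ n)
    (t : Fin n → k') (ht0 : ∀ i, t i ≠ 0) (htk : ∀ i, conj (t i) = t i)
    (T : Matrix (Fin n) (Fin n) k') (hT : T = Matrix.diagonal t)
    (hTinv : IsUnit T.det)
    (x : Matrix (Fin n ⊕ Fin n) (Fin n) k') (hx : ctr conj x * Hmat k' n * x = T) :
    ∃ D : Matrix (Fin 2) (Fin 2) k',
      (ctr conj D = D ∧
        ∀ vv : Fin 2 → k',
          gxv conj T x vv = ∑ i : Fin 2, ∑ j : Fin 2, conj (vv i) * D i j * vv j) ∧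
      (∀ D' : Matrix (Fin 2) (Fin 2) k',
        (ctr conj D' = D' ∧
          ∀ vv : Fin 2 → k',
            gxv conj T x vv = ∑ i : Fin 2, ∑ j : Fin 2, conj (vv i) * D' i j * vv j) →
        D' = D) ∧
      conj (D 0 0) = D 0 0 ∧ conj (D 1 1) = D 1 1 ∧
      D 0 1 + D 1 0 = -(fTi conj T x (n - 1) (Nat.sub_le n 1)) ∧
      ((∀ (i : ℕ) (h1 : 1 ≤ i) (h2 : i ≤ n), fTi conj T x i h2 ≠ 0) → D.det = 0) :=
  stmt8_general conj hinvol hconj_ne n hn T hTinv x hx
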